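/- Let n ∈ ℕ be even, let r be uniform on E_n = {v ∈ {-1,1}^n : #₁(v) even}, and let x, y ∈ {-1,1}^n with #₁(x) ≡ #₁(y) (mod 2). Write α = (n - |Diff(x,y)|)/n. Then for integers t_x, t_y with 2t_x in the support of ⟨r,x⟩ and 2t_y in the support of ⟨r,y⟩, Pr[⟨r,x⟩ = 2t_x and ⟨r,y⟩ = 2t_y] = (1/2^{n-1}) · C(αn, (αn + t_x + t_y)/2) · C((1-α)n, ((1-α)n + t_x - t_y)/2). -/

import Mathlib

/-!
With `x = sgn ∘ b`, `y = sgn ∘ c` and `u = (r == b)`, one has `⟨r, x⟩ = ∑ sgn u` and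
`⟨r, y⟩ = ∑_{b = c} sgn u - ∑_{b ≠ c} sgn u`. The event `⟨r,x⟩ = 2 tx, ⟨r,y⟩ = 2 ty` therefore
prescribes the number of `true` entries of `u` on the agreement set and on `Diff(x, y)`
separately, and `r ↦ u` is a bijection, so the count is a product of two binomial coefficients.
Restricting `r` to even vectors costs nothing: `⟨r, x⟩` determines the parity of `#{i | r i}`,
and one even witness exists. Finally `|E_n| = 2^(n-1)`, since flipping one coordinate swaps
even and odd vectors.
-/

open Finset

/-- The ±1 value associated with a boolean. -/
def sgn (b : Bool) : ℤ := if b then 1 else -1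

/-- The set of "even" sign vectors: those with an even number of +1 entries. -/
def evenVecs (n : ℕ) : Finset (Fin n → Bool) :=
  univ.filter fun r => Even ((univ.filter fun i => r i = true).card)

/-- Binomial coefficient with an integer lower argument, interpreted as 0
when the argument is negative. -/
def chooseZ (n : ℕ) (k : ℤ) : ℕ := if 0 ≤ k then n.choose k.toNat else 0

lemma sgn_mul_sgn (a b : Bool) : sgn a * sgn b = sgn (a == b) := by
  cases a <;> cases b <;> rfl

lemma sgn_eq_one_iff {a : Bool} : sgn a = 1 ↔ a = true := by
  cases a <;> decide

lemma sgn_injective : Function.Injective sgn := by decide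

lemma exists_eq_sgn {ι : Type*} {x : ι → ℤ} (hx : ∀ i, x i = 1 ∨ x i = -1) :
    ∃ b : ι → Bool, x = fun i => sgn (b i) :=
  ⟨fun i => x i = 1, funext fun i => by rcases hx i with h | h <;> simp [h, sgn]⟩

lemma chooseZ_natCast (m k : ℕ) : chooseZ m k = m.choose k := by
  simp [chooseZ]

lemma chooseZ_of_neg (m : ℕ) {k : ℤ} (hk : k < 0) : chooseZ m k = 0 := by
  simp [chooseZ, hk.not_ge]

lemma sum_sgn {ι : Type*} (s : Finset ι) (u : ι → Bool) :
    ∑ i ∈ s, sgn (u i) = 2 * #{i ∈ s | u i} - #s := by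
  rw [card_filter, card_eq_sum_ones]
  push_cast
  rw [mul_sum, ← sum_sub_distrib]
  exact sum_congr rfl fun i _ => by cases u i <;> rfl

section
variable {ι : Type*} [Fintype ι]

lemma sum_sgn_mul_sgn (r b : ι → Bool) :
    ∑ i, sgn (r i) * sgn (b i) = 2 * #{i | r i = b i} - Fintype.card ι := by
  simp only [sgn_mul_sgn, sum_sgn, beq_iff_eq, card_univ]

lemma card_filter_eq_add_card_filter_add_card_filter (r b : ι → Bool) :
    #{i | r i = b i} + #{i | r i} + #{i | b i} = Fintype.card ι + 2 * #{i | r i ∧ b i} := by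
  simp only [card_filter, Fintype.card_eq_sum_ones, mul_sum, ← sum_add_distrib]
  exact sum_congr rfl fun i _ => by cases r i <;> cases b i <;> rfl

lemma even_card_iff_of_sum_sgn_mul_sgn_eq {r r' b : ι → Bool}
    (h : ∑ i, sgn (r i) * sgn (b i) = ∑ i, sgn (r' i) * sgn (b i)) :
    Even #{i | r i} ↔ Even #{i | r' i} := by
  rw [sum_sgn_mul_sgn, sum_sgn_mul_sgn] at h
  have hr := card_filter_eq_add_card_filter_add_card_filter r b
  have hr' := card_filter_eq_add_card_filter_add_card_filter r' b
  rw [Nat.even_iff, Nat.even_iff]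
  omega

lemma ncard_setOf_sgn_eq_one (b : ι → Bool) : {i | sgn (b i) = 1}.ncard = #{i | b i} := by
  rw [← Set.ncard_coe_finset]
  congr 1
  ext i
  simp [sgn_eq_one_iff]

variable [DecidableEq ι]

lemma ncard_setOf_sgn_ne_sgn (b c : ι → Bool) :
    {i | sgn (b i) ≠ sgn (c i)}.ncard = #({i | b i = c i} : Finset ι)ᶜ := by
  rw [← Set.ncard_coe_finset]
  congr 1
  ext i
  simp [sgn_injective.eq_iff]

lemma sum_sgn_mul_sgn_eq_sub (r b c : ι → Bool) :
    ∑ i, sgn (r i) * sgn (c i) =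
      ∑ i ∈ {i | b i = c i}, sgn (r i == b i) -
        ∑ i ∈ ({i | b i = c i} : Finset ι)ᶜ, sgn (r i == b i) := by
  rw [← sum_add_sum_compl {i | b i = c i}, sub_eq_add_neg, ← sum_neg_distrib]
  congr 1 <;> refine sum_congr rfl fun i hi => ?_ <;>
    simp only [mem_compl, mem_filter, mem_univ, true_and] at hi <;> revert hi <;>
    cases r i <;> cases b i <;> cases c i <;> decide

lemma odd_card_update_not_iff (r : ι → Bool) (j : ι) :
    Odd #{i | Function.update r j (!r j) i} ↔ Even #{i | r i} := by
  have hagree : #{i | Function.update r j (!r j) i = r i} = Fintype.card ι - 1 := by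
    rw [← card_singleton j, ← card_compl]
    congr 1
    ext i
    by_cases hi : i = j <;> simp [hi]
  have hsum := card_filter_eq_add_card_filter_add_card_filter (Function.update r j (!r j)) r
  have hpos : 0 < Fintype.card ι := Fintype.card_pos_iff.mpr ⟨j⟩
  rw [Nat.odd_iff, Nat.even_iff]
  omega

lemma card_filter_beq (b : ι → Bool) (P : (ι → Bool) → Prop) [DecidablePred P] :
    #{r : ι → Bool | P fun i => r i == b i} = #{v : ι → Bool | P v} := by
  have hinv : Function.Involutive fun (r : ι → Bool) i => r i == b i := fun r =>
    funext fun i => by dsimp only; cases r i <;> cases b i <;> rfl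
  exact card_equiv hinv.toPerm (by simp)

lemma card_filter_card_eq_and_card_compl_eq (s : Finset ι) (k₁ k₂ : ℕ) :
    #{v : ι → Bool | #{i ∈ s | v i} = k₁ ∧ #{i ∈ sᶜ | v i} = k₂} =
      (#s).choose k₁ * (#sᶜ).choose k₂ := by
  have hsplit : ∀ P ⊆ s, ∀ Q ⊆ sᶜ,
      {i ∈ s | decide (i ∈ P ∪ Q)} = P ∧ {i ∈ sᶜ | decide (i ∈ P ∪ Q)} = Q := by
    intro P hP Q hQ
    constructor <;> ext i <;>
      simp only [mem_union, Bool.decide_or, Bool.or_eq_true, decide_eq_true_eq, mem_filter,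
        mem_compl] <;> grind [mem_compl]
  rw [← card_powersetCard, ← card_powersetCard, ← card_product]
  refine card_nbij' (fun v => ({i ∈ s | v i}, {i ∈ sᶜ | v i})) (fun PQ i => i ∈ PQ.1 ∪ PQ.2)
    ?_ ?_ ?_ ?_
  · intro v hv
    simp_all [mem_powersetCard, filter_subset]
  · rintro ⟨P, Q⟩ hPQ
    simp only [coe_product, Set.mem_prod, mem_coe, mem_powersetCard] at hPQ
    obtain ⟨⟨hP, rfl⟩, ⟨hQ, rfl⟩⟩ := hPQ
    obtain ⟨hPs, hQs⟩ := hsplit P hP Q hQ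
    simp only [mem_coe, mem_filter, mem_univ, hPs, hQs, and_self]
  · intro v _
    funext i
    by_cases hi : i ∈ s <;> simp [hi]
  · rintro ⟨P, Q⟩ hPQ
    simp only [coe_product, Set.mem_prod, mem_coe, mem_powersetCard] at hPQ
    obtain ⟨hPs, hQs⟩ := hsplit P hPQ.1.1 Q hPQ.2.1
    simp only [hPs, hQs]

lemma card_filter_card_eq_and_card_compl_eq_int (s : Finset ι) (k₁ k₂ : ℤ) :
    #{v : ι → Bool | (#{i ∈ s | v i} : ℤ) = k₁ ∧ (#{i ∈ sᶜ | v i} : ℤ) = k₂} =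
      chooseZ #s k₁ * chooseZ #sᶜ k₂ := by
  rcases lt_or_ge k₁ 0 with h₁ | h₁
  · rw [chooseZ_of_neg _ h₁, zero_mul, card_eq_zero, filter_eq_empty_iff]
    omega
  rcases lt_or_ge k₂ 0 with h₂ | h₂
  · rw [chooseZ_of_neg _ h₂, mul_zero, card_eq_zero, filter_eq_empty_iff]
    omega
  lift k₁ to ℕ using h₁
  lift k₂ to ℕ using h₂
  simpa only [chooseZ_natCast, Nat.cast_inj] using card_filter_card_eq_and_card_compl_eq s k₁ k₂

lemma card_filter_sum_sgn_mul_sgn_eq {b c : ι → Bool} {A : Finset ι}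
    (hA : A = ({i | b i = c i} : Finset ι))
    (tx ty : ℤ) (hdivA : 2 ∣ (#A : ℤ) + tx + ty) (hdivB : 2 ∣ (#Aᶜ : ℤ) + tx - ty) :
    #{r : ι → Bool |
        ∑ i, sgn (r i) * sgn (b i) = 2 * tx ∧ ∑ i, sgn (r i) * sgn (c i) = 2 * ty} =
      chooseZ #A ((#A + tx + ty) / 2) * chooseZ #Aᶜ ((#Aᶜ + tx - ty) / 2) := by
  have hsum_b (r : ι → Bool) :
      ∑ i, sgn (r i) * sgn (b i) = ∑ i ∈ A, sgn (r i == b i) + ∑ i ∈ Aᶜ, sgn (r i == b i) := by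
    rw [sum_add_sum_compl]
    simp only [sgn_mul_sgn]
  let P (v : ι → Bool) : Prop :=
    (#{i ∈ A | v i} : ℤ) = (#A + tx + ty) / 2 ∧ (#{i ∈ Aᶜ | v i} : ℤ) = (#Aᶜ + tx - ty) / 2
  calc _ = #{r : ι → Bool | P fun i => r i == b i} := by
        refine congrArg card (filter_congr fun r _ => ?_)
        dsimp only [P]
        rw [hsum_b, sum_sgn_mul_sgn_eq_sub r b c, ← hA, sum_sgn, sum_sgn]
        omega
    _ = #{v : ι → Bool | P v} := card_filter_beq b P
    _ = _ := card_filter_card_eq_and_card_compl_eq_int A _ _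

end

lemma card_evenVecs (n : ℕ) : #(evenVecs n) = 2 ^ (n - 1) := by
  rcases n with _ | m
  · rfl
  let flip (r : Fin (m + 1) → Bool) := Function.update r 0 (!r 0)
  have hflip : Function.Involutive flip := fun r => by simp [flip]
  have hodd : #(evenVecs (m + 1)) = #{r : Fin (m + 1) → Bool | ¬Even #{i | r i}} :=
    card_equiv hflip.toPerm fun r => by simp [evenVecs, flip, odd_card_update_not_iff]
  have htotal := card_filter_add_card_filter_not (s := univ) fun r : Fin (m + 1) → Bool =>
    Even #{i | r i}
  rw [card_univ, Fintype.card_fun, Fintype.card_bool, Fintype.card_fin, pow_succ] at htotal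
  rw [add_tsub_cancel_right]
  unfold evenVecs at hodd ⊢
  omega

theorem joint_prob_inner_general {n : ℕ} (x y : Fin n → ℤ)
    (hx : ∀ i, x i = 1 ∨ x i = -1) (hy : ∀ i, y i = 1 ∨ y i = -1)
    (hpar : {i : Fin n | x i = 1}.ncard % 2 = {i : Fin n | y i = 1}.ncard % 2)
    (tx ty : ℤ)
    (hsx : ∃ r ∈ evenVecs n, ∑ i, sgn (r i) * x i = 2 * tx)
    (hsy : ∃ r ∈ evenVecs n, ∑ i, sgn (r i) * y i = 2 * ty) :
    (((evenVecs n).filter fun r =>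
          ∑ i, sgn (r i) * x i = 2 * tx ∧ ∑ i, sgn (r i) * y i = 2 * ty).card : ℝ) /
        ((evenVecs n).card : ℝ) =
      (1 / 2 ^ (n - 1)) *
        (chooseZ (n - {i : Fin n | x i ≠ y i}.ncard)
            ((((n : ℤ) - {i : Fin n | x i ≠ y i}.ncard) + tx + ty) / 2) : ℝ) *
        (chooseZ ({i : Fin n | x i ≠ y i}.ncard)
            ((({i : Fin n | x i ≠ y i}.ncard : ℤ) + tx - ty) / 2) : ℝ) := by
  obtain ⟨b, rfl⟩ := exists_eq_sgn hx
  obtain ⟨c, rfl⟩ := exists_eq_sgn hy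
  obtain ⟨r₀, hr₀, hr₀b⟩ := hsx
  obtain ⟨r₁, hr₁, hr₁c⟩ := hsy
  simp only [evenVecs, mem_filter, mem_univ, true_and] at hr₀ hr₁
  have heven (r : Fin n → Bool) (hr : ∑ i, sgn (r i) * sgn (b i) = 2 * tx) : Even #{i | r i} :=
    (even_card_iff_of_sum_sgn_mul_sgn_eq (hr.trans hr₀b.symm)).2 hr₀
  rw [card_evenVecs, evenVecs, filter_filter,
    filter_congr fun r _ => and_iff_right_of_imp fun h => heven r h.1]
  simp only [ncard_setOf_sgn_eq_one, ncard_setOf_sgn_ne_sgn] at hpar ⊢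
  rw [sum_sgn_mul_sgn, Fintype.card_fin] at hr₀b hr₁c
  rw [Nat.even_iff] at hr₀ hr₁
  have h₀ := card_filter_eq_add_card_filter_add_card_filter r₀ b
  have h₁ := card_filter_eq_add_card_filter_add_card_filter r₁ c
  have hbc := card_filter_eq_add_card_filter_add_card_filter b c
  simp only [Fintype.card_fin] at h₀ h₁ hbc
  set A : Finset (Fin n) := {i | b i = c i} with hA
  have hAc : #Aᶜ = n - #A := by rw [card_compl, Fintype.card_fin]
  have hAn : #A ≤ n := card_le_univ A |>.trans_eq (Fintype.card_fin n)
  -- modulo 2, both `#A` and `tx + ty` are `n + #b + #c`, and `n` is even by `hr₀b`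
  have hdivA : 2 ∣ (#A : ℤ) + tx + ty := by omega
  have hdivB : 2 ∣ (#Aᶜ : ℤ) + tx - ty := by omega
  rw [card_filter_sum_sgn_mul_sgn_eq hA tx ty hdivA hdivB, hAc,
    show n - (n - #A) = #A by omega, show (n : ℤ) - ↑(n - #A) = #A by omega]
  push_cast
  ring

/-- joint core probabilities. With α n = n - |Diff(x,y)|,
Pr[⟨r,x⟩ = 2t_x, ⟨r,y⟩ = 2t_y] =
(1/2^(n-1)) C(αn, (αn + t_x + t_y)/2) C((1-α)n, ((1-α)n + t_x - t_y)/2). -/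
theorem joint_prob_inner {n : ℕ} (hn : Even n) (x y : Fin n → ℤ)
    (hx : ∀ i, x i = 1 ∨ x i = -1) (hy : ∀ i, y i = 1 ∨ y i = -1)
    (hpar : {i : Fin n | x i = 1}.ncard % 2 = {i : Fin n | y i = 1}.ncard % 2)
    (tx ty : ℤ)
    (hsx : ∃ r ∈ evenVecs n, ∑ i, sgn (r i) * x i = 2 * tx)
    (hsy : ∃ r ∈ evenVecs n, ∑ i, sgn (r i) * y i = 2 * ty) :
    (((evenVecs n).filter fun r =>
          ∑ i, sgn (r i) * x i = 2 * tx ∧ ∑ i, sgn (r i) * y i = 2 * ty).card : ℝ) /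
        ((evenVecs n).card : ℝ) =
      (1 / 2 ^ (n - 1)) *
        (chooseZ (n - {i : Fin n | x i ≠ y i}.ncard)
            ((((n : ℤ) - {i : Fin n | x i ≠ y i}.ncard) + tx + ty) / 2) : ℝ) *
        (chooseZ ({i : Fin n | x i ≠ y i}.ncard)
            ((({i : Fin n | x i ≠ y i}.ncard : ℤ) + tx - ty) / 2) : ℝ) :=
  joint_prob_inner_general x y hx hy hpar tx ty hsx hsy
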